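/- Fix distinct points z₂, …, z_n in the unit disc with β(z_i, z_j) ≥ η for all i ≠ j, and values δ₂, …, δ_n with |δ_j| ≤ ε. Define recursively δ^1_j = [δ_j, δ₂]/[z_j, z₂], etc. (the triangle of hyperbolic difference quotients with Δ^0_j = δ_j). Then if ε is small enough (depending on η and n), there is a constant C'(η, n) > 0 such that β(Δ^k_i, Δ^k_j) ≤ C'·ε·β(z_i, z_j) for all 0 ≤ k ≤ n−2 and k+2 ≤ i < j ≤ n. -/

import Mathlib

open Complex Set ComplexConjugate

noncomputable section

/-- The open unit disc in ℂ. -/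
def unitDisc : Set ℂ := {z : ℂ | ‖z‖ < 1}

/-- Pseudohyperbolic distance ρ(a,b) = |(a-b)/(1 - conj b · a)|. -/
def pd (a b : ℂ) : ℝ := ‖(a - b) / (1 - conj b * a)‖

/-- Hyperbolic distance β = log((1+ρ)/(1-ρ)). -/
def hd (a b : ℂ) : ℝ := Real.log ((1 + pd a b) / (1 - pd a b))

/-- The complex pseudohyperbolic "bracket" [a,b] = (b-a)/(1 - conj b · a). -/
def hbr (a b : ℂ) : ℂ := (b - a) / (1 - conj b * a)

/-- f is an analytic self-map of the unit disc. -/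
def IsSelfMap (f : ℂ → ℂ) : Prop :=
  DifferentiableOn ℂ f unitDisc ∧ Set.MapsTo f unitDisc unitDisc

/-- Hyperbolic derivative f^h(z) = (1-|z|²) f'(z) / (1-|f z|²). -/
def hypDeriv (f : ℂ → ℂ) (z : ℂ) : ℂ :=
  (1 - (‖z‖ : ℂ) ^ 2) * deriv f z / (1 - (‖f z‖ : ℂ) ^ 2)

/-- The triangle of hyperbolic difference quotients for points indexed 2, …, n:
`Δ^0_j = δ_j` and `Δ^{k+1}_j = [Δ^k_j, Δ^k_{k+2}]/[z_j, z_{k+2}]`. -/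
def hdq2 (z δ : ℕ → ℂ) : ℕ → ℕ → ℂ
  | 0, j => δ j
  | k + 1, j => hbr (hdq2 z δ k j) (hdq2 z δ k (k + 2)) / hbr (z j) (z (k + 2))

/-!
Separation `β(z_i, z_j) ≥ η` means `ρ(z_i, z_j) ≥ s := tanh (η / 2) = (e^η - 1) / (e^η + 1)`, so
every denominator bracket of the triangle has modulus at least `s`, while for `|a|, |b| ≤ r ≤ 1/2`
the numerator bracket `[a, b]` has modulus at most `8r/3`. By induction `|Δ^k_j| ≤ (8/(3s))^k ε`.
For small `ε` two entries of a row are then within pseudohyperbolic distance `1/2`, where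
`β ≤ 4ρ`, so `β(Δ^k_i, Δ^k_j) = O(ε)`; and `β(z_i, z_j) ≥ η` turns this into `O(ε β(z_i, z_j))`.
-/

lemma pd_nonneg (a b : ℂ) : 0 ≤ pd a b := norm_nonneg _

lemma pd_eq_norm_hbr (a b : ℂ) : pd a b = ‖hbr a b‖ := by
  rw [pd, hbr, ← norm_neg, ← neg_div, neg_sub]

lemma norm_hbr_le {a b : ℂ} {r : ℝ} (hr : r ≤ 1 / 2) (ha : ‖a‖ ≤ r) (hb : ‖b‖ ≤ r) :
    ‖hbr a b‖ ≤ 8 / 3 * r := by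
  have hr0 : 0 ≤ r := (norm_nonneg a).trans ha
  have hnum : ‖b - a‖ ≤ 2 * r := by linarith [norm_sub_le b a]
  have hprod : ‖conj b * a‖ ≤ r * r := by
    rw [norm_mul, Complex.norm_conj]
    exact mul_le_mul hb ha (norm_nonneg _) hr0
  have hden : 3 / 4 ≤ ‖1 - conj b * a‖ := by
    have := norm_sub_norm_le (1 : ℂ) (conj b * a)
    rw [norm_one] at this
    nlinarith
  calc ‖hbr a b‖ = ‖b - a‖ / ‖1 - conj b * a‖ := norm_div _ _
    _ ≤ 2 * r / (3 / 4) := div_le_div₀ (by positivity) hnum (by norm_num) hden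
    _ = 8 / 3 * r := by ring

lemma tanh_half_le_pd {η : ℝ} {a b : ℂ} (h : η ≤ hd a b) :
    (Real.exp η - 1) / (Real.exp η + 1) ≤ pd a b := by
  have hp0 := pd_nonneg a b
  rcases lt_or_ge (pd a b) 1 with hp1 | hp1
  · have hpos : 0 < (1 + pd a b) / (1 - pd a b) := div_pos (by linarith) (by linarith)
    have hexp := (Real.le_log_iff_exp_le hpos).1 h
    rw [le_div_iff₀ (by linarith)] at hexp
    rw [div_le_iff₀ (by positivity)]
    linarith
  · exact ((div_le_one (by positivity)).2 (by linarith)).trans hp1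

lemma hd_le_four_mul_pd {a b : ℂ} (h : pd a b ≤ 1 / 2) : hd a b ≤ 4 * pd a b := by
  have hp0 := pd_nonneg a b
  have hquot : (1 + pd a b) / (1 - pd a b) ≤ 1 + 4 * pd a b := by
    rw [div_le_iff₀ (by linarith)]
    nlinarith
  have hlog := Real.log_le_sub_one_of_pos
    (div_pos (by linarith : 0 < 1 + pd a b) (by linarith : 0 < 1 - pd a b))
  rw [hd]
  linarith

section Triangle

variable {z δ : ℕ → ℂ} {n : ℕ} {s ε : ℝ}

lemma norm_hdq2_le (hs : 0 < s) (hs1 : s ≤ 1)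
    (hsep : ∀ i j, 2 ≤ i → i ≤ n → 2 ≤ j → j ≤ n → i ≠ j → s ≤ pd (z i) (z j))
    (hδ : ∀ j, 2 ≤ j → j ≤ n → ‖δ j‖ ≤ ε) (hε : 0 ≤ ε) (hsmall : (8 / (3 * s)) ^ n * ε ≤ 1 / 2) :
    ∀ k j, k + 2 ≤ j → j ≤ n → ‖hdq2 z δ k j‖ ≤ (8 / (3 * s)) ^ k * ε := by
  have hK : 1 ≤ 8 / (3 * s) := by rw [le_div_iff₀ (by positivity)]; linarith
  intro k
  induction k with
  | zero => exact fun j hj hjn => by simpa [hdq2] using hδ j (by omega) hjn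
  | succ k ih =>
    intro j hj hjn
    have hr : (8 / (3 * s)) ^ k * ε ≤ 1 / 2 :=
      (mul_le_mul_of_nonneg_right (pow_le_pow_right₀ hK (by omega)) hε).trans hsmall
    have hnum := norm_hbr_le hr (ih j (by omega) hjn) (ih (k + 2) le_rfl (by omega))
    have hden : s ≤ ‖hbr (z j) (z (k + 2))‖ := by
      rw [← pd_eq_norm_hbr]
      exact hsep j (k + 2) (by omega) hjn (by omega) (by omega) (by omega)
    calc ‖hdq2 z δ (k + 1) j‖
        = ‖hbr (hdq2 z δ k j) (hdq2 z δ k (k + 2))‖ / ‖hbr (z j) (z (k + 2))‖ := norm_div _ _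
      _ ≤ 8 / 3 * ((8 / (3 * s)) ^ k * ε) / s := div_le_div₀ (by positivity) hnum hs hden
      _ = (8 / (3 * s)) ^ (k + 1) * ε := by rw [pow_succ]; field_simp

lemma hd_hdq2_le (hs : 0 < s) (hs1 : s ≤ 1)
    (hsep : ∀ i j, 2 ≤ i → i ≤ n → 2 ≤ j → j ≤ n → i ≠ j → s ≤ pd (z i) (z j))
    (hδ : ∀ j, 2 ≤ j → j ≤ n → ‖δ j‖ ≤ ε) (hε : 0 ≤ ε)
    (hsmall : (8 / (3 * s)) ^ n * ε ≤ 3 / 16) {k i j : ℕ} (hi : k + 2 ≤ i) (hin : i ≤ n)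
    (hj : k + 2 ≤ j) (hjn : j ≤ n) :
    hd (hdq2 z δ k i) (hdq2 z δ k j) ≤ 32 / 3 * (8 / (3 * s)) ^ n * ε := by
  have hK : 1 ≤ 8 / (3 * s) := by rw [le_div_iff₀ (by positivity)]; linarith
  have hr : (8 / (3 * s)) ^ k * ε ≤ (8 / (3 * s)) ^ n * ε :=
    mul_le_mul_of_nonneg_right (pow_le_pow_right₀ hK (by omega)) hε
  have bound := norm_hdq2_le hs hs1 hsep hδ hε (by linarith) k
  have hpd : pd (hdq2 z δ k i) (hdq2 z δ k j) ≤ 8 / 3 * ((8 / (3 * s)) ^ n * ε) := by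
    rw [pd_eq_norm_hbr]
    exact norm_hbr_le (by linarith) ((bound i hi hin).trans hr) ((bound j hj hjn).trans hr)
  linarith [hd_le_four_mul_pd (a := hdq2 z δ k i) (b := hdq2 z δ k j) (by linarith)]

end Triangle

theorem separated_small_values_compatibility
    (η : ℝ) (hη : 0 < η) (n : ℕ) :
    ∃ ε₀ > 0, ∃ C' > 0, ∀ ε, 0 < ε → ε ≤ ε₀ →
      ∀ z δ : ℕ → ℂ,
        (∀ j, 2 ≤ j → j ≤ n → z j ∈ unitDisc) →
        (∀ i j, 2 ≤ i → i ≤ n → 2 ≤ j → j ≤ n → i ≠ j → η ≤ hd (z i) (z j)) →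
        (∀ j, 2 ≤ j → j ≤ n → δ j ∈ unitDisc ∧ ‖δ j‖ ≤ ε) →
        ∀ k i j, k ≤ n - 2 → k + 2 ≤ i → i < j → j ≤ n →
          hd (hdq2 z δ k i) (hdq2 z δ k j) ≤ C' * ε * hd (z i) (z j) := by
  set s := (Real.exp η - 1) / (Real.exp η + 1)
  have hexp : 1 < Real.exp η := Real.one_lt_exp_iff.2 hη
  have hs : 0 < s := div_pos (by linarith) (by linarith)
  have hs1 : s ≤ 1 := (div_le_one (by linarith)).2 (by linarith)
  set M := (8 / (3 * s)) ^ n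
  have hM : 0 < M := by positivity
  refine ⟨3 / (16 * M), by positivity, 32 * M / (3 * η), by positivity, ?_⟩
  intro ε hε hεM z δ _ hsep hδ k i j _ hi hij hjn
  have hsmall : M * ε ≤ 3 / 16 := by
    rw [le_div_iff₀ (by positivity)] at hεM
    linarith
  have hβ := hd_hdq2_le hs hs1
    (fun i j hi hin hj hjn hij => tanh_half_le_pd (hsep i j hi hin hj hjn hij))
    (fun j hj hjn => (hδ j hj hjn).2) hε.le hsmall hi (by omega) (by omega) hjn
  have hzij : η ≤ hd (z i) (z j) := hsep i j (by omega) (by omega) (by omega) hjn (by omega)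
  calc hd (hdq2 z δ k i) (hdq2 z δ k j) ≤ 32 / 3 * M * ε := hβ
    _ = 32 * M / (3 * η) * ε * η := by field_simp
    _ ≤ 32 * M / (3 * η) * ε * hd (z i) (z j) := by gcongr
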